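/- arXiv:2012.11069 — 2 statements merged into one kernel-verified Lean document; each statement's English description precedes it below -/
import Mathlib

section
/- Let P ∈ SL(2,ℝ) with operator norm ‖P‖, and let R_φ = [[cos φ, −sin φ],[sin φ, cos φ]] be the rotation matrix with angle φ ∈ (π/4, 3π/4). Then the operator norm of P R_φ P^{−1} satisfies ‖P‖²/2 ≤ ‖P R_φ P^{−1}‖ ≤ ‖P‖². -/
open scoped Real BigOperators
open Filter MeasureTheory

noncomputable section

/-- Operator norm of a 2×2 matrix over `ℝ` or `ℂ` (Euclidean operator norm). -/
noncomputable def opNorm {𝕜 : Type} [RCLike 𝕜] (A : Matrix (Fin 2) (Fin 2) 𝕜) : ℝ :=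
  ‖LinearMap.toContinuousLinearMap (Matrix.toEuclideanLin A)‖

/-- Embedding of a real point of the torus into `ℂ^d`. -/
def cplx {d : ℕ} (x : Fin d → ℝ) : Fin d → ℂ := fun i => (x i : ℂ)

/-- The strip `|Im z_i| < h` in `ℂ^d`. -/
def strip (d : ℕ) (h : ℝ) : Set (Fin d → ℂ) := {z | ∀ i, |(z i).im| < h}

/-- Distance of a real number to the integers, `‖x‖_𝕋`. -/
noncomputable def dZ (x : ℝ) : ℝ := ⨅ j : ℤ, |x - (j : ℝ)|

/-- Distance of a complex number to the integers. -/
noncomputable def dZC (w : ℂ) : ℝ := ⨅ j : ℤ, ‖w - (j : ℤ)‖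

/-- `⟨k, α⟩` for `k ∈ ℤ^d`, `α ∈ ℝ^d`. -/
def inp {d : ℕ} (k : Fin d → ℤ) (α : Fin d → ℝ) : ℝ := ∑ i, (k i : ℝ) * α i

/-- `|k|` for `k ∈ ℤ^d` (sup norm). -/
def nrmZ {d : ℕ} (m : Fin d → ℤ) : ℝ := ((Finset.univ.sup fun i => (m i).natAbs : ℕ) : ℝ)

/-- `α ∈ 𝕋^d` is rationally independent. -/
def RatIndep {d : ℕ} (α : Fin d → ℝ) : Prop :=
  ∀ m : Fin d → ℤ, m ≠ 0 → ∀ j : ℤ, inp m α ≠ (j : ℝ)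

/-- The Diophantine condition `DC_d(κ', τ)`. -/
def DCdWith {d : ℕ} (κ' τ : ℝ) (α : Fin d → ℝ) : Prop :=
  ∀ m : Fin d → ℤ, m ≠ 0 → ∀ j : ℤ, |inp m α - (j : ℝ)| > κ' / (nrmZ m) ^ τ

/-- The Diophantine set `DC_d`. -/
def DCd {d : ℕ} (α : Fin d → ℝ) : Prop :=
  ∃ κ' > (0 : ℝ), ∃ τ > (d : ℝ) - 1, DCdWith κ' τ α

/-- All entries are holomorphic on the strip. -/
def HoloOn (d : ℕ) (h : ℝ) (F : (Fin d → ℂ) → Matrix (Fin 2) (Fin 2) ℂ) : Prop :=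
  ∀ i j, DifferentiableOn ℂ (fun z => F z i j) (strip d h)

/-- `ℤ^d`-periodicity (functions on `𝕋^d`). -/
def Per1 {d : ℕ} (F : (Fin d → ℂ) → Matrix (Fin 2) (Fin 2) ℂ) : Prop :=
  ∀ (m : Fin d → ℤ) (z), F (z + fun i => ((m i : ℤ) : ℂ)) = F z

/-- `(2ℤ)^d`-periodicity (functions on the double torus `2𝕋^d`). -/
def Per2 {d : ℕ} (F : (Fin d → ℂ) → Matrix (Fin 2) (Fin 2) ℂ) : Prop :=
  ∀ (m : Fin d → ℤ) (z), F (z + fun i => (2 * (m i : ℤ) : ℂ)) = F z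

/-- Real `ℤ^d`-periodicity. -/
def PerR1 {d : ℕ} {X : Type*} (F : (Fin d → ℝ) → X) : Prop :=
  ∀ (m : Fin d → ℤ) (x), F (x + fun i => ((m i : ℤ) : ℝ)) = F x

/-- Real `(2ℤ)^d`-periodicity. -/
def PerR2 {d : ℕ} {X : Type*} (F : (Fin d → ℝ) → X) : Prop :=
  ∀ (m : Fin d → ℤ) (x), F (x + fun i => (2 * (m i : ℤ) : ℝ)) = F x

/-- `F` takes values in `SL(2,ℝ)` at the real points. -/
def RealSL2On (d : ℕ) (F : (Fin d → ℂ) → Matrix (Fin 2) (Fin 2) ℂ) : Prop :=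
  ∀ x : Fin d → ℝ, (∀ i j, (F (cplx x) i j).im = 0) ∧ (F (cplx x)).det = 1

/-- Membership in `SU(1,1)`. -/
def SU11 (B : Matrix (Fin 2) (Fin 2) ℂ) : Prop :=
  B 1 0 = (starRingEnd ℂ) (B 0 1) ∧ B 1 1 = (starRingEnd ℂ) (B 0 0) ∧
    Complex.normSq (B 0 0) - Complex.normSq (B 0 1) = 1

/-- `F` takes values in `SU(1,1)` at the real points. -/
def RealSU11On (d : ℕ) (F : (Fin d → ℂ) → Matrix (Fin 2) (Fin 2) ℂ) : Prop :=
  ∀ x : Fin d → ℝ, SU11 (F (cplx x))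

/-- Bounded on the strip. -/
def BoundedOn (d : ℕ) (h : ℝ) (F : (Fin d → ℂ) → Matrix (Fin 2) (Fin 2) ℂ) : Prop :=
  ∃ C, ∀ z ∈ strip d h, opNorm (F z) ≤ C

/-- The full `C^ω_h(𝕋^d, SL(2,ℝ))` predicate. -/
def CwSL2 (d : ℕ) (h : ℝ) (F : (Fin d → ℂ) → Matrix (Fin 2) (Fin 2) ℂ) : Prop :=
  HoloOn d h F ∧ Per1 F ∧ RealSL2On d F ∧ BoundedOn d h F

/-- `‖F‖_h ≤ c`. -/
def stripLe (d : ℕ) (h : ℝ) (F : (Fin d → ℂ) → Matrix (Fin 2) (Fin 2) ℂ) (c : ℝ) : Prop :=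
  ∀ z ∈ strip d h, opNorm (F z) ≤ c

/-- `‖F‖_h < ε`. -/
def stripLt (d : ℕ) (h : ℝ) (F : (Fin d → ℂ) → Matrix (Fin 2) (Fin 2) ℂ) (ε : ℝ) : Prop :=
  ∃ r, r < ε ∧ stripLe d h F r

/-- `‖F‖_h` as a supremum. -/
noncomputable def stripNorm (d : ℕ) (h : ℝ) (F : (Fin d → ℂ) → Matrix (Fin 2) (Fin 2) ℂ) : ℝ :=
  sSup {r | ∃ z ∈ strip d h, r = opNorm (F z)}

/-- The restriction of a complex-analytic matrix map to the (real) torus. -/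
def realify {d : ℕ} (F : (Fin d → ℂ) → Matrix (Fin 2) (Fin 2) ℂ) :
    (Fin d → ℝ) → Matrix (Fin 2) (Fin 2) ℝ :=
  fun x => (F (cplx x)).map Complex.re

/-- Iterates `A(θ; n)` of a real quasiperiodic cocycle. -/
def iterR {d : ℕ} (α : Fin d → ℝ) (A : (Fin d → ℝ) → Matrix (Fin 2) (Fin 2) ℝ) :
    ℕ → (Fin d → ℝ) → Matrix (Fin 2) (Fin 2) ℝ
  | 0, _ => 1
  | n + 1, x => A (x + (n : ℝ) • α) * iterR α A n x

/-- Iterates of a complex-matrix-valued cocycle over the real torus. -/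
def iterC {d : ℕ} (α : Fin d → ℝ) (A : (Fin d → ℝ) → Matrix (Fin 2) (Fin 2) ℂ) :
    ℕ → (Fin d → ℝ) → Matrix (Fin 2) (Fin 2) ℂ
  | 0, _ => 1
  | n + 1, x => A (x + (n : ℝ) • α) * iterC α A n x

/-- Iterates of a cocycle on the complex strip. -/
def iterS {d : ℕ} (α : Fin d → ℝ) (A : (Fin d → ℂ) → Matrix (Fin 2) (Fin 2) ℂ) :
    ℕ → (Fin d → ℂ) → Matrix (Fin 2) (Fin 2) ℂ
  | 0, _ => 1
  | n + 1, z => A (z + fun i => (((n : ℝ) * α i : ℝ) : ℂ)) * iterS α A n z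

/-- Fundamental domain `[0,1]^d` of the torus. -/
def box (d : ℕ) : Set (Fin d → ℝ) := Set.univ.pi fun _ : Fin d => Set.Icc (0 : ℝ) 1

/-- The Lyapunov exponent `L(α, A)`. -/
noncomputable def lyap {d : ℕ} (α : Fin d → ℝ) (A : (Fin d → ℝ) → Matrix (Fin 2) (Fin 2) ℝ) : ℝ :=
  Filter.limsup
    (fun n : ℕ => (n : ℝ)⁻¹ * ∫ x in box d, Real.log (opNorm (iterR α A n x))) atTop

/-- Continuous `SL(2,ℝ)`-valued function on the torus. -/
def ContSL2 {d : ℕ} (A : (Fin d → ℝ) → Matrix (Fin 2) (Fin 2) ℝ) : Prop :=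
  (∀ i j, Continuous fun x => A x i j) ∧ PerR1 A ∧ ∀ x, (A x).det = 1

/-- `C^0` distance on the torus. -/
noncomputable def dist0 {d : ℕ} (A B : (Fin d → ℝ) → Matrix (Fin 2) (Fin 2) ℝ) : ℝ :=
  sSup {r | ∃ x, r = opNorm (A x - B x)}

/-- The filter of continuous `SL(2,ℝ)` perturbations `B` with `‖B - A‖₀ → 0`, `B ≠ A`. -/
noncomputable def punct {d : ℕ} (A : (Fin d → ℝ) → Matrix (Fin 2) (Fin 2) ℝ) :
    Filter ((Fin d → ℝ) → Matrix (Fin 2) (Fin 2) ℝ) :=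
  ⨅ δ ∈ Set.Ioi (0 : ℝ),
    Filter.principal {B | ContSL2 B ∧ 0 < dist0 B A ∧ dist0 B A < δ}

/-- The Lyapunov exponent is exactly `κ`-Hölder continuous at `(α, A)`:
`liminf_{‖B-A‖₀→0} log|L(α,A)-L(α,B)| / log‖B-A‖₀ = κ`. -/
def ExactHolderAt {d : ℕ} (α : Fin d → ℝ) (A : (Fin d → ℝ) → Matrix (Fin 2) (Fin 2) ℝ)
    (κ : ℝ) : Prop :=
  Filter.liminf
    (fun B => Real.log |lyap α A - lyap α B| / Real.log (dist0 B A)) (punct A) = κ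

/-- Euclidean norm on `ℝ²`. -/
noncomputable def enorm2 (v : Fin 2 → ℝ) : ℝ := Real.sqrt (v 0 ^ 2 + v 1 ^ 2)

/-- Uniform hyperbolicity of the cocycle `(α, A)`. -/
def UH {d : ℕ} (α : Fin d → ℝ) (A : (Fin d → ℝ) → Matrix (Fin 2) (Fin 2) ℝ) : Prop :=
  ∃ (Es Eu : (Fin d → ℝ) → Submodule ℝ (Fin 2 → ℝ))
    (P : (Fin d → ℝ) → Matrix (Fin 2) (Fin 2) ℝ) (C lam : ℝ),
    0 < C ∧ 0 < lam ∧
    PerR1 Es ∧ PerR1 Eu ∧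
    (∀ x, IsCompl (Es x) (Eu x)) ∧
    (∀ i j, Continuous fun x => P x i j) ∧
    (∀ x, (∀ v ∈ Es x, (P x).mulVec v = v) ∧ (∀ v ∈ Eu x, (P x).mulVec v = 0)) ∧
    (∀ x, Submodule.map (Matrix.mulVecLin (A x)) (Es x) = Es (x + α) ∧
          Submodule.map (Matrix.mulVecLin (A x)) (Eu x) = Eu (x + α)) ∧
    (∀ (n : ℕ) (x), ∀ v ∈ Es x,
        enorm2 ((iterR α A n x).mulVec v) ≤ C * Real.exp (-lam * n) * enorm2 v) ∧
    (∀ (n : ℕ) (x), ∀ v ∈ Eu x,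
        enorm2 ((iterR α A n (x - (n : ℝ) • α))⁻¹.mulVec v) ≤ C * Real.exp (-lam * n) * enorm2 v)

/-- Almost reducibility: the closure of the analytic conjugacy class of `(α, A)` contains a
constant cocycle, with conjugacies defined on the double torus. -/
def AR {d : ℕ} (α : Fin d → ℝ) (A : (Fin d → ℂ) → Matrix (Fin 2) (Fin 2) ℂ) : Prop :=
  ∃ h' > (0 : ℝ), ∃ B : ℕ → (Fin d → ℂ) → Matrix (Fin 2) (Fin 2) ℂ,
    ∃ Cst : ℕ → Matrix (Fin 2) (Fin 2) ℝ,
      (∀ n, HoloOn d h' (B n) ∧ Per2 (B n) ∧ RealSL2On d (B n)) ∧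
      (∀ n, (Cst n).det = 1) ∧
      (∀ ε > (0 : ℝ), ∃ N, ∀ n ≥ N, ∀ z ∈ strip d h',
        opNorm ((B n (z + cplx α))⁻¹ * A z * B n z -
          (Cst n).map (fun a => (a : ℂ))) ≤ ε)

/-- `S` is dense in `AR_α \ UH_α` in the `C^ω(𝕋^d, SL(2,ℝ))` topology. -/
def DenseInARmUH {d : ℕ} (α : Fin d → ℝ)
    (S : Set ((Fin d → ℂ) → Matrix (Fin 2) (Fin 2) ℂ)) : Prop :=
  ∀ (h : ℝ), 0 < h → ∀ A, CwSL2 d h A → AR α A → ¬ UH α (realify A) →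
    ∀ ε > (0 : ℝ), ∃ h', 0 < h' ∧ h' ≤ h ∧ ∃ A' ∈ S,
      CwSL2 d h' A' ∧ stripLt d h' (fun z => A' z - A z) ε

/-- `C^s`-reducibility of the cocycle `(α, A)` (conjugacy on the double torus). -/
def CsRed {d : ℕ} (s : ℕ) (α : Fin d → ℝ)
    (A : (Fin d → ℝ) → Matrix (Fin 2) (Fin 2) ℝ) : Prop :=
  ∃ B : (Fin d → ℝ) → Matrix (Fin 2) (Fin 2) ℝ, ∃ Cst : Matrix (Fin 2) (Fin 2) ℝ,
    (∀ i j, ContDiff ℝ (s : ℕ∞) fun x => B x i j) ∧ PerR2 B ∧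
    (∀ x, (B x).det = 1) ∧ Cst.det = 1 ∧
    ∀ x, (B (x + α))⁻¹ * A x * B x = Cst

/-- `e_k(z) = e^{2πi⟨k,z⟩}`. -/
noncomputable def ek {d : ℕ} (k : Fin d → ℤ) (z : Fin d → ℂ) : ℂ :=
  Complex.exp (2 * (π : ℂ) * Complex.I * ∑ i, (k i : ℂ) * z i)

/-- Diagonal 2×2 matrix. -/
def diagM (a b : ℂ) : Matrix (Fin 2) (Fin 2) ℂ := !![a, 0; 0, b]

/-- The resonant constants `Ã_n`. -/
noncomputable def AKA {d : ℕ} (α : Fin d → ℝ) (k : ℕ → Fin d → ℤ) (n : ℕ) :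
    Matrix (Fin 2) (Fin 2) ℂ :=
  diagM (ek (k n) (cplx α)) (ek (-(k n)) (cplx α))

/-- The conjugations `H_n`. -/
noncomputable def AKH {d : ℕ} (k : ℕ → Fin d → ℤ) (n : ℕ) (z : Fin d → ℂ) :
    Matrix (Fin 2) (Fin 2) ℂ :=
  diagM (ek (k n) z) (ek (-(k n)) z)

/-- The perturbations `F_n`. -/
noncomputable def AKF {d : ℕ} (k : ℕ → Fin d → ℤ) (t lam : ℕ → ℝ) (n : ℕ)
    (z : Fin d → ℂ) : Matrix (Fin 2) (Fin 2) ℂ :=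
  (2 * (π : ℂ) * Complex.I) •
    !![(t n : ℂ), (lam n : ℂ) * ek (2 • k n) z;
       -(lam n : ℂ) * ek (-(2 • k n)) z, -(t n : ℂ)]

/-- The constant elliptic generator `2πi [[t, λ],[−λ, −t]]`. -/
noncomputable def ellipGen (t lam : ℝ) : Matrix (Fin 2) (Fin 2) ℂ :=
  (2 * (π : ℂ) * Complex.I) • !![(t : ℂ), (lam : ℂ); -(lam : ℂ), -(t : ℂ)]

/-- The conjugations `G_n = H_n D_n`. -/
noncomputable def AKG {d : ℕ} (k : ℕ → Fin d → ℤ) (D : ℕ → Matrix (Fin 2) (Fin 2) ℂ)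
    (n : ℕ) (z : Fin d → ℂ) : Matrix (Fin 2) (Fin 2) ℂ :=
  AKH k n z * D n

/-- The accumulated conjugations `B_n = G_0 ⋯ G_{n-1}`. -/
noncomputable def AKB {d : ℕ} (k : ℕ → Fin d → ℤ) (D : ℕ → Matrix (Fin 2) (Fin 2) ℂ) :
    ℕ → (Fin d → ℂ) → Matrix (Fin 2) (Fin 2) ℂ
  | 0 => fun _ => 1
  | n + 1 => fun z => AKB k D n z * AKG k D n z

/-- The cocycles `A_n(θ) = B_n(θ+α) Ã_n B_n(θ)⁻¹`. -/
noncomputable def AKAn {d : ℕ} (α : Fin d → ℝ) (k : ℕ → Fin d → ℤ)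
    (D : ℕ → Matrix (Fin 2) (Fin 2) ℂ) (n : ℕ) (z : Fin d → ℂ) :
    Matrix (Fin 2) (Fin 2) ℂ :=
  AKB k D n (z + cplx α) * AKA α k n * (AKB k D n z)⁻¹

/-- Complexified Schrödinger cocycle map `S_E^V`. -/
noncomputable def SEVc {d : ℕ} (V : (Fin d → ℂ) → ℂ) (E : ℝ) (z : Fin d → ℂ) :
    Matrix (Fin 2) (Fin 2) ℂ :=
  !![(E : ℂ) - V z, -1; 1, 0]

/-- Real Schrödinger cocycle map on the torus. -/
noncomputable def SEVr {d : ℕ} (V : (Fin d → ℂ) → ℂ) (E : ℝ) (x : Fin d → ℝ) :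
    Matrix (Fin 2) (Fin 2) ℝ :=
  !![E - (V (cplx x)).re, -1; 1, 0]

/-- `E` is a subcritical energy for the potential `V` and frequency `α`. -/
def SubcritE {d : ℕ} (α : Fin d → ℝ) (V : (Fin d → ℂ) → ℂ) (E : ℝ) : Prop :=
  ¬ UH α (SEVr V E) ∧
  ∃ δ > (0 : ℝ), ∀ γ > (0 : ℝ), ∃ N, ∀ n ≥ N, ∀ z ∈ strip d δ,
    opNorm (iterS α (SEVc V E) n z) ≤ Real.exp (γ * n)

/-- Analytic real-valued potential on the strip (`V ∈ C^ω_h(𝕋^d, ℝ)`). -/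
def CwReal (d : ℕ) (h : ℝ) (V : (Fin d → ℂ) → ℂ) : Prop :=
  DifferentiableOn ℂ V (strip d h) ∧
  (∀ (m : Fin d → ℤ) (z), V (z + fun i => ((m i : ℤ) : ℂ)) = V z) ∧
  (∀ x : Fin d → ℝ, (V (cplx x)).im = 0) ∧
  (∃ C, ∀ z ∈ strip d h, ‖V z‖ ≤ C)

/-- The `k`-th Fourier coefficient of a potential. -/
noncomputable def fourierCoeff' {d : ℕ} (V : (Fin d → ℂ) → ℂ) (k : Fin d → ℤ) : ℂ :=
  ∫ x in box d, V (cplx x) * Complex.exp (-(2 * (π : ℂ) * Complex.I) * ∑ i, (k i : ℂ) * (x i : ℂ))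


namespace St14
open Matrix
set_option maxHeartbeats 2000000
set_option synthInstance.maxHeartbeats 1000000

lemma opN_eq (A : Matrix (Fin 2) (Fin 2) ℝ) : opNorm A = ‖Matrix.toEuclideanCLM (𝕜 := ℝ) A‖ := rfl

lemma opN_mul_le (A B : Matrix (Fin 2) (Fin 2) ℝ) : opNorm (A * B) ≤ opNorm A * opNorm B := by
  rw [opN_eq, opN_eq, opN_eq, _root_.map_mul]
  exact norm_mul_le _ _

lemma opN_transpose (A : Matrix (Fin 2) (Fin 2) ℝ) : opNorm Aᵀ = opNorm A := by
  rw [opN_eq, opN_eq]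
  have h : Aᵀ = star A := by simp [Matrix.star_eq_conjTranspose]
  rw [h, map_star, ContinuousLinearMap.star_eq_adjoint]
  exact LinearIsometryEquiv.norm_map ContinuousLinearMap.adjoint _

lemma opN_smul (r : ℝ) (A : Matrix (Fin 2) (Fin 2) ℝ) : opNorm (r • A) = |r| * opNorm A := by
  have h := norm_smul r (Matrix.toEuclideanCLM (𝕜 := ℝ) A)
  rw [opN_eq, _root_.map_smul, opN_eq, Real.norm_eq_abs] at *
  convert h using 2

lemma opN_sub_le (A B : Matrix (Fin 2) (Fin 2) ℝ) : opNorm (A - B) ≤ opNorm A + opNorm B := by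
  rw [opN_eq, opN_eq, opN_eq, map_sub]
  exact norm_sub_le _ _

lemma opN_unit {A : Matrix (Fin 2) (Fin 2) ℝ} (h : Aᵀ * A = 1) : opNorm A = 1 := by
  have h2 : ‖Matrix.toEuclideanCLM (𝕜 := ℝ) A‖ * ‖Matrix.toEuclideanCLM (𝕜 := ℝ) A‖ = 1 := by
    rw [← CStarRing.norm_star_mul_self (x := Matrix.toEuclideanCLM (𝕜 := ℝ) A), ← map_star,
      ← _root_.map_mul]
    have hs : star A = Aᵀ := by simp [Matrix.star_eq_conjTranspose]
    rw [hs, h, _root_.map_one]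
    exact norm_one
  rw [opN_eq]
  nlinarith [norm_nonneg (Matrix.toEuclideanCLM (𝕜 := ℝ) A)]

lemma opN_self_mul_transpose (A : Matrix (Fin 2) (Fin 2) ℝ) :
    opNorm (A * Aᵀ) = opNorm A ^ 2 := by
  rw [opN_eq, opN_eq]
  have h : Aᵀ = star A := by simp [Matrix.star_eq_conjTranspose]
  rw [h, _root_.map_mul, map_star,
    CStarRing.norm_self_mul_star (x := Matrix.toEuclideanCLM (𝕜 := ℝ) A), sq]

def Jm : Matrix (Fin 2) (Fin 2) ℝ := !![0, -1; 1, 0]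
def Ji : Matrix (Fin 2) (Fin 2) ℝ := !![0, 1; -1, 0]

lemma JJi : Jm * Ji = 1 := by
  ext i j; fin_cases i <;> fin_cases j <;>
    simp [Jm, Ji, Matrix.mul_apply, Fin.sum_univ_two, Matrix.vecHead, Matrix.vecTail]

lemma JiJ : Ji * Jm = 1 := by
  ext i j; fin_cases i <;> fin_cases j <;>
    simp [Jm, Ji, Matrix.mul_apply, Fin.sum_univ_two, Matrix.vecHead, Matrix.vecTail]

lemma Jt : Jmᵀ = Ji := by
  ext i j; fin_cases i <;> fin_cases j <;> simp [Jm, Ji]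

lemma Jit : Jiᵀ = Jm := by
  ext i j; fin_cases i <;> fin_cases j <;> simp [Jm, Ji]

lemma opN_J : opNorm Jm = 1 := opN_unit (by rw [Jt, JiJ])
lemma opN_Ji : opNorm Ji = 1 := opN_unit (by rw [Jit, JJi])

lemma opN_mul_right_unit (X U V : Matrix (Fin 2) (Fin 2) ℝ) (hUV : U * V = 1)
    (hU : opNorm U = 1) (hV : opNorm V = 1) : opNorm (X * U) = opNorm X := by
  refine le_antisymm (by simpa [hU] using opN_mul_le X U) ?_
  have h : X = X * U * V := by rw [mul_assoc, hUV, mul_one]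
  calc opNorm X = opNorm (X * U * V) := by rw [← h]
    _ ≤ opNorm (X * U) * opNorm V := opN_mul_le _ _
    _ = opNorm (X * U) := by rw [hV, mul_one]

lemma opN_mul_left_unit (X U V : Matrix (Fin 2) (Fin 2) ℝ) (hVU : V * U = 1)
    (hU : opNorm U = 1) (hV : opNorm V = 1) : opNorm (U * X) = opNorm X := by
  refine le_antisymm (by simpa [hU] using opN_mul_le U X) ?_
  have h : X = V * (U * X) := by rw [← mul_assoc, hVU, one_mul]
  calc opNorm X = opNorm (V * (U * X)) := by rw [← h]
    _ ≤ opNorm V * opNorm (U * X) := opN_mul_le _ _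
    _ = opNorm (U * X) := by rw [hV, one_mul]

lemma opN_conj_J (X : Matrix (Fin 2) (Fin 2) ℝ) : opNorm (Jm * Xᵀ * Ji) = opNorm X := by
  rw [opN_mul_right_unit _ Ji Jm JiJ opN_Ji opN_J,
    opN_mul_left_unit _ Jm Ji JiJ opN_J opN_Ji, opN_transpose]

end St14

open Matrix St14
set_option maxHeartbeats 2000000
set_option synthInstance.maxHeartbeats 1000000

theorem statement14 (P : Matrix (Fin 2) (Fin 2) ℝ) (hP : P.det = 1) (φ : ℝ)
    (hφ : φ ∈ Set.Ioo (π / 4) (3 * π / 4)) :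
    opNorm P ^ 2 / 2 ≤
        opNorm (P * !![Real.cos φ, -Real.sin φ; Real.sin φ, Real.cos φ] * P⁻¹) ∧
      opNorm (P * !![Real.cos φ, -Real.sin φ; Real.sin φ, Real.cos φ] * P⁻¹) ≤
        opNorm P ^ 2 := by
  obtain ⟨hφ1, hφ2⟩ := hφ
  have hpi : (0 : ℝ) < π := Real.pi_pos
  have habs : |φ - π / 2| ≤ π / 3 := by
    rw [abs_le]; constructor <;> nlinarith
  have hsin : 1 / 2 ≤ Real.sin φ := by
    have h1 : Real.cos (π / 3) ≤ Real.cos |φ - π / 2| :=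
      Real.cos_le_cos_of_nonneg_of_le_pi (abs_nonneg _) (by nlinarith) habs
    rwa [Real.cos_abs, Real.cos_sub_pi_div_two, Real.cos_pi_div_three] at h1
  obtain ⟨a, b, e, d, hPe⟩ : ∃ a b e d, P = !![a, b; e, d] :=
    ⟨_, _, _, _, Matrix.eta_fin_two P⟩
  rw [hPe, Matrix.det_fin_two_of] at hP
  set s := Real.sin φ with hs
  set c := Real.cos φ with hc
  have hsc : s ^ 2 + c ^ 2 = 1 := Real.sin_sq_add_cos_sq φ
  set Q : Matrix (Fin 2) (Fin 2) ℝ := !![d, -b; -e, a] with hQ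
  set Pm : Matrix (Fin 2) (Fin 2) ℝ := !![a, b; e, d] with hPm
  have hQP : Q * Pm = 1 := by
    ext i j; fin_cases i <;> fin_cases j <;>
      simp [hQ, hPm, Matrix.mul_apply, Fin.sum_univ_two, Matrix.vecHead, Matrix.vecTail] <;>
      (first
        | linear_combination hP
        | linear_combination -hP
        | ring1)
  have hPinv : Pm⁻¹ = Q := Matrix.inv_eq_left_inv hQP
  set Rot : Matrix (Fin 2) (Fin 2) ℝ := !![c, -s; s, c] with hR
  set Rot2 : Matrix (Fin 2) (Fin 2) ℝ := !![c, s; -s, c] with hR2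
  have hRu : opNorm Rot = 1 := by
    refine opN_unit ?_
    ext i j; fin_cases i <;> fin_cases j <;>
      simp [hR, Matrix.mul_apply, Fin.sum_univ_two, Matrix.vecHead, Matrix.vecTail, Matrix.transpose_apply] <;>
        (first
          | linear_combination hsc
          | linear_combination -hsc
          | ring1)
  have hR2u : opNorm Rot2 = 1 := by
    refine opN_unit ?_
    ext i j; fin_cases i <;> fin_cases j <;>
      simp [hR2, Matrix.mul_apply, Fin.sum_univ_two, Matrix.vecHead, Matrix.vecTail, Matrix.transpose_apply] <;>
        (first
          | linear_combination hsc
          | linear_combination -hsc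
          | ring1)
  set M : Matrix (Fin 2) (Fin 2) ℝ := Pm * Rot * Q with hM
  set N : Matrix (Fin 2) (Fin 2) ℝ := Pm * Rot2 * Q with hN
  have hQnorm : opNorm Q = opNorm Pm := by
    have hQeq : Q = Jm * Matrix.transpose Pm * Ji := by
      ext i j; fin_cases i <;> fin_cases j <;>
        simp [hQ, hPm, Jm, Ji, Matrix.mul_apply, Fin.sum_univ_two, Matrix.vecHead, Matrix.vecTail, Matrix.transpose_apply, Matrix.vecMul, dotProduct]
    rw [hQeq, opN_conj_J]
  have hub : opNorm M ≤ opNorm Pm ^ 2 := by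
    calc opNorm M ≤ opNorm (Pm * Rot) * opNorm Q := opN_mul_le _ _
      _ ≤ opNorm Pm * opNorm Rot * opNorm Q :=
          mul_le_mul_of_nonneg_right (opN_mul_le _ _)
            (by rw [hQnorm, opN_eq]; exact norm_nonneg _)
      _ = opNorm Pm ^ 2 := by rw [hRu, hQnorm]; ring
  have hNM : N = Jm * Matrix.transpose M * Ji := by
    ext i j; fin_cases i <;> fin_cases j <;>
      simp [hN, hM, hQ, hPm, hR, hR2, Jm, Ji, Matrix.mul_apply, Fin.sum_univ_two, Matrix.vecHead, Matrix.vecTail,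
        Matrix.transpose_apply, Matrix.vecMul, dotProduct] <;> ring
  have hNnorm : opNorm N = opNorm M := by rw [hNM, opN_conj_J]
  have hMN : M - N = (-(2 * s)) • (Pm * Matrix.transpose Pm * Ji) := by
    ext i j; fin_cases i <;> fin_cases j <;>
      simp [hM, hN, hQ, hPm, hR, hR2, Jm, Ji, Matrix.mul_apply, Fin.sum_univ_two, Matrix.vecHead, Matrix.vecTail,
        Matrix.transpose_apply, Matrix.vecMul, dotProduct] <;> ring
  have hMNnorm : opNorm (M - N) = 2 * s * opNorm Pm ^ 2 := by
    rw [hMN, opN_smul, abs_neg, abs_of_nonneg (by linarith : (0:ℝ) ≤ 2 * s),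
      opN_mul_right_unit _ Ji Jm JiJ opN_Ji opN_J, opN_self_mul_transpose]
  have hlb : opNorm Pm ^ 2 / 2 ≤ opNorm M := by
    have h1 : opNorm (M - N) ≤ opNorm M + opNorm N := opN_sub_le _ _
    rw [hMNnorm, hNnorm] at h1
    nlinarith [sq_nonneg (opNorm Pm)]
  rw [hPe, hPinv]
  exact ⟨hlb, hub⟩

end
end

section
/- Let α ∈ 𝕋^d be rationally independent, ρ ∈ ℝ, and Ã = diag(e^{2πiρ}, e^{−2πiρ}). Suppose that for every k with 2k ∈ ℤ^d and k ≠ 0 one has 2ρ ≢ ⟨k,α⟩ (mod ℤ). Then every continuous map B : ℝ^d/(2ℤ)^d → M(2,ℂ) satisfying B(θ+α) = Ã B(θ) Ã^{−1} for all θ is constant. -/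
open scoped Real BigOperators
open Filter MeasureTheory

noncomputable section

namespace Stmt16Aux

open MeasureTheory Complex AddCircle

instance : Fact (0 < (2:ℝ)) := ⟨two_pos⟩

abbrev G2 (d : ℕ) := Fin d → AddCircle (2:ℝ)

def pG {d : ℕ} (x : Fin d → ℝ) : G2 d := fun i => (x i : AddCircle (2:ℝ))

lemma isOpenQuotientMap_pG {d : ℕ} : IsOpenQuotientMap (pG (d := d)) :=
  IsOpenQuotientMap.piMap fun _ => QuotientAddGroup.isOpenQuotientMap_mk

lemma pG_add {d : ℕ} (x y : Fin d → ℝ) : pG (x + y) = pG x + pG y := by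
  funext i; simp [pG]

/-- The character `e^{πi⟨m,·⟩}` on the double torus. -/
noncomputable def chiC {d : ℕ} (m : Fin d → ℤ) : C(G2 d, ℂ) :=
  ⟨fun g => ∏ i, (fourier (m i) (g i) : ℂ),
   continuous_finset_prod _ fun i _ => (fourier (m i)).continuous.comp (continuous_apply i)⟩

lemma chiC_apply {d : ℕ} (m : Fin d → ℤ) (g : G2 d) :
    chiC m g = ∏ i, (fourier (m i) (g i) : ℂ) := rfl

lemma chiC_mul {d : ℕ} (m m' : Fin d → ℤ) : chiC m * chiC m' = chiC (m + m') := by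
  ext g
  simp only [ContinuousMap.mul_apply, chiC_apply, ← Finset.prod_mul_distrib, Pi.add_apply]
  exact Finset.prod_congr rfl fun i _ => (fourier_add).symm

lemma chiC_zero {d : ℕ} : chiC (0 : Fin d → ℤ) = 1 := by
  ext g
  simp [chiC_apply, fourier_zero]

lemma star_chiC {d : ℕ} (m : Fin d → ℤ) : star (chiC m) = chiC (-m) := by
  ext g
  simp only [ContinuousMap.star_apply, chiC_apply, star_prod, Pi.neg_apply]
  exact Finset.prod_congr rfl fun i _ => by rw [fourier_neg]; rfl

lemma chiC_add_arg {d : ℕ} (m : Fin d → ℤ) (g h : G2 d) :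
    chiC m (g + h) = chiC m g * chiC m h := by
  simp only [chiC_apply, Pi.add_apply, ← Finset.prod_mul_distrib]
  refine Finset.prod_congr rfl fun i _ => ?_
  rw [fourier_apply, fourier_apply, fourier_apply, smul_add, AddCircle.toCircle_add,
    Circle.coe_mul]

lemma chiC_pG {d : ℕ} (m : Fin d → ℤ) (x : Fin d → ℝ) :
    chiC m (pG x) = Complex.exp (Real.pi * Complex.I *
      ((∑ i, (m i : ℝ) * x i : ℝ) : ℂ)) := by
  simp only [chiC_apply, pG, fourier_coe_apply]
  rw [← Complex.exp_sum]
  congr 1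
  push_cast
  rw [Finset.mul_sum]
  refine Finset.sum_congr rfl fun i _ => ?_
  ring

lemma exp_pi_mul_conj (r : ℝ) :
    Complex.exp (Real.pi * Complex.I * r) *
      (starRingEnd ℂ) (Complex.exp (Real.pi * Complex.I * r)) = 1 := by
  rw [← Complex.exp_conj, ← Complex.exp_add]
  have : (starRingEnd ℂ) ((Real.pi : ℂ) * Complex.I * r) =
      -((Real.pi : ℂ) * Complex.I * r) := by
    simp [map_mul, Complex.conj_I, Complex.conj_ofReal]
  rw [this, add_neg_cancel, Complex.exp_zero]

lemma integrable_of_continuous {d : ℕ} (f : G2 d → ℂ) (hf : Continuous f) :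
    Integrable f (volume : Measure (G2 d)) :=
  hf.integrable_of_hasCompactSupport (HasCompactSupport.of_compactSpace f)

lemma integrable_of_continuousR {d : ℕ} (f : G2 d → ℝ) (hf : Continuous f) :
    Integrable f (volume : Measure (G2 d)) :=
  hf.integrable_of_hasCompactSupport (HasCompactSupport.of_compactSpace f)

lemma integral_chiC {d : ℕ} (m : Fin d → ℤ) (hm : m ≠ 0) :
    ∫ g : G2 d, chiC m g = 0 := by
  obtain ⟨i, hi⟩ := Function.ne_iff.mp hm
  have hi' : m i ≠ 0 := hi
  have hmi : ((m i : ℝ)) ≠ 0 := Int.cast_ne_zero.mpr hi'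
  set t : Fin d → ℝ := fun j => if j = i then 1 / (m i : ℝ) else 0 with ht
  have hval : chiC m (pG t) = -1 := by
    rw [chiC_pG]
    have hsum : (∑ j, (m j : ℝ) * t j) = 1 := by
      rw [Finset.sum_eq_single i]
      · simp only [ht, if_pos rfl]
        field_simp
      · intro j _ hj; simp [ht, hj]
      · intro h; exact absurd (Finset.mem_univ i) h
    rw [hsum, Complex.ofReal_one, mul_one, Complex.exp_pi_mul_I]
  have h1 : (∫ g : G2 d, chiC m g) = ∫ g : G2 d, chiC m (g + pG t) :=
    (integral_add_right_eq_self (fun g : G2 d => chiC m g) (pG t)).symm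
  have h2 : (∫ g : G2 d, chiC m (g + pG t)) = -∫ g : G2 d, chiC m g := by
    simp only [chiC_add_arg, hval, mul_neg_one]
    exact integral_neg _
  have h3 : (∫ g : G2 d, chiC m g) + (∫ g : G2 d, chiC m g) = 0 := by
    nth_rewrite 1 [h1]
    rw [h2]; ring
  exact add_self_eq_zero.mp h3

/-- The star subalgebra spanned by the characters. -/
noncomputable def chiAlg (d : ℕ) : StarSubalgebra ℂ C(G2 d, ℂ) where
  carrier := (Submodule.span ℂ (Set.range (chiC (d := d))) : Set C(G2 d, ℂ))
  add_mem' := fun ha hb => Submodule.add_mem _ ha hb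
  zero_mem' := Submodule.zero_mem _
  one_mem' := Submodule.subset_span ⟨0, chiC_zero⟩
  mul_mem' := by
    intro a b ha hb
    induction ha using Submodule.span_induction with
    | mem x hx =>
      induction hb using Submodule.span_induction with
      | mem y hy =>
        obtain ⟨m, rfl⟩ := hx
        obtain ⟨m', rfl⟩ := hy
        rw [chiC_mul]
        exact Submodule.subset_span ⟨m + m', rfl⟩
      | zero => rw [mul_zero]; exact Submodule.zero_mem _
      | add y z _ _ ihy ihz => rw [mul_add]; exact Submodule.add_mem _ ihy ihz
      | smul a y _ ihy => rw [mul_smul_comm]; exact Submodule.smul_mem _ _ ihy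
    | zero => rw [zero_mul]; exact Submodule.zero_mem _
    | add x y _ _ ihx ihy => rw [add_mul]; exact Submodule.add_mem _ ihx ihy
    | smul a x _ ihx => rw [smul_mul_assoc]; exact Submodule.smul_mem _ _ ihx
  algebraMap_mem' := fun r => by
    rw [Algebra.algebraMap_eq_smul_one]
    exact Submodule.smul_mem _ _ (Submodule.subset_span ⟨0, chiC_zero⟩)
  star_mem' := by
    intro a ha
    induction ha using Submodule.span_induction with
    | mem x hx =>
      obtain ⟨m, rfl⟩ := hx
      rw [star_chiC]
      exact Submodule.subset_span ⟨-m, rfl⟩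
    | zero => rw [star_zero]; exact Submodule.zero_mem _
    | add x y _ _ ihx ihy => rw [star_add]; exact Submodule.add_mem _ ihx ihy
    | smul a x _ ihx => rw [star_smul]; exact Submodule.smul_mem _ _ ihx

lemma chiAlg_separates (d : ℕ) : (chiAlg d).SeparatesPoints := by
  intro x y hxy
  have hne : ∃ i, x i ≠ y i := by
    by_contra h
    push_neg at h
    exact hxy (funext h)
  obtain ⟨i, hi⟩ := hne
  refine ⟨_, ⟨chiC (Pi.single i 1), Submodule.subset_span ⟨_, rfl⟩, rfl⟩, ?_⟩
  have hx : ∀ g : G2 d, chiC (Pi.single i 1) g = fourier 1 (g i) := by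
    intro g
    rw [chiC_apply, Finset.prod_eq_single i]
    · rw [Pi.single_eq_same]
    · intro j _ hj
      rw [Pi.single_eq_of_ne hj]
      exact fourier_zero
    · intro h; exact absurd (Finset.mem_univ i) h
  show chiC (Pi.single i 1) x ≠ chiC (Pi.single i 1) y
  rw [hx, hx]
  simp only [fourier_one]
  intro h
  exact hi (injective_toCircle two_ne_zero (Subtype.coe_injective h))

lemma complete {d : ℕ} (F : C(G2 d, ℂ))
    (hF : ∀ m : Fin d → ℤ, ∫ g : G2 d, F g * (starRingEnd ℂ) (chiC m g) = 0) :
    ∀ g, F g = 0 := by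
  have hInt : ∀ q : C(G2 d, ℂ),
      Integrable (fun g => F g * (starRingEnd ℂ) (q g)) (volume : Measure (G2 d)) :=
    fun q => integrable_of_continuous _
      (F.continuous.mul (Complex.continuous_conj.comp q.continuous))
  have hspan : ∀ q ∈ Submodule.span ℂ (Set.range (chiC (d := d))),
      ∫ g : G2 d, F g * (starRingEnd ℂ) (q g) = 0 := by
    intro q hq
    induction hq using Submodule.span_induction with
    | mem x hx => obtain ⟨m, rfl⟩ := hx; exact hF m
    | zero => simp
    | add x y hx hy ihx ihy =>
      have : (fun g : G2 d => F g * (starRingEnd ℂ) ((x + y) g)) =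
          fun g => F g * (starRingEnd ℂ) (x g) + F g * (starRingEnd ℂ) (y g) := by
        funext g
        simp [mul_add]
      rw [this, integral_add (hInt x) (hInt y), ihx, ihy, add_zero]
    | smul a x hx ihx =>
      have : (fun g : G2 d => F g * (starRingEnd ℂ) ((a • x) g)) =
          fun g => (starRingEnd ℂ) a * (F g * (starRingEnd ℂ) (x g)) := by
        funext g
        simp only [ContinuousMap.smul_apply, smul_eq_mul, map_mul]
        ring
      rw [this, integral_const_mul, ihx, mul_zero]
  have hdense := ContinuousMap.starSubalgebra_topologicalClosure_eq_top_of_separatesPoints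
    (chiAlg d) (chiAlg_separates d)
  have hFmem : F ∈ closure ((chiAlg d : Set C(G2 d, ℂ))) := by
    have : F ∈ (chiAlg d).topologicalClosure := by rw [hdense]; trivial
    exact this
  set V : ℝ := (volume (Set.univ : Set (G2 d))).toReal with hV
  have key : ∀ ε > (0:ℝ), ‖∫ g : G2 d, F g * (starRingEnd ℂ) (F g)‖ ≤ V * (‖F‖ * ε) := by
    intro ε hε
    obtain ⟨q, hqmem, hqd⟩ := Metric.mem_closure_iff.mp hFmem ε hε
    have hq0 := hspan q hqmem
    have heq : (∫ g : G2 d, F g * (starRingEnd ℂ) (F g)) =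
        ∫ g : G2 d, F g * (starRingEnd ℂ) ((F - q) g) := by
      have hsub : (fun g : G2 d => F g * (starRingEnd ℂ) ((F - q) g)) =
          fun g => F g * (starRingEnd ℂ) (F g) - F g * (starRingEnd ℂ) (q g) := by
        funext g
        simp only [ContinuousMap.sub_apply, map_sub]
        ring
      rw [hsub, integral_sub (hInt F) (hInt q), hq0, sub_zero]
    rw [heq]
    have hb : ∀ g : G2 d, ‖F g * (starRingEnd ℂ) ((F - q) g)‖ ≤ ‖F‖ * ε := by
      intro g
      rw [norm_mul, RCLike.norm_conj]
      have h1 : ‖F g‖ ≤ ‖F‖ := F.norm_coe_le_norm g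
      have h2 : ‖(F - q) g‖ ≤ ε := by
        have := ContinuousMap.norm_coe_le_norm (F - q) g
        rw [dist_eq_norm] at hqd
        exact le_trans this hqd.le
      exact mul_le_mul h1 h2 (norm_nonneg _) (norm_nonneg _)
    calc ‖∫ g : G2 d, F g * (starRingEnd ℂ) ((F - q) g)‖
        ≤ ∫ g : G2 d, ‖F g * (starRingEnd ℂ) ((F - q) g)‖ := norm_integral_le_integral_norm _
      _ ≤ ∫ _g : G2 d, ‖F‖ * ε := by
          refine integral_mono ?_ (integrable_const _) hb
          exact integrable_of_continuousR _
            (F.continuous.mul (Complex.continuous_conj.comp (F - q).continuous)).norm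
      _ = V * (‖F‖ * ε) := by rw [integral_const, smul_eq_mul, measureReal_def]
  have hI : (∫ g : G2 d, F g * (starRingEnd ℂ) (F g)) = 0 := by
    by_contra hne
    have hpos : 0 < ‖∫ g : G2 d, F g * (starRingEnd ℂ) (F g)‖ := norm_pos_iff.mpr hne
    set N : ℝ := ‖∫ g : G2 d, F g * (starRingEnd ℂ) (F g)‖ with hN
    have hVnn : 0 ≤ V := ENNReal.toReal_nonneg
    have hFnn : 0 ≤ ‖F‖ := norm_nonneg _
    have hD : (0:ℝ) < 2 * (V * ‖F‖ + 1) := by positivity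
    have h8 := key (N / (2 * (V * ‖F‖ + 1))) (by positivity)
    have h9 : V * (‖F‖ * (N / (2 * (V * ‖F‖ + 1)))) = (V * ‖F‖ * N) / (2 * (V * ‖F‖ + 1)) := by
      ring
    rw [h9] at h8
    have h10 : (V * ‖F‖ * N) / (2 * (V * ‖F‖ + 1)) < N := by
      rw [div_lt_iff₀ hD]
      nlinarith [mul_nonneg hVnn hFnn, hpos]
    linarith
  have h2 : (∫ g : G2 d, (Complex.normSq (F g) : ℂ)) = 0 := by
    rw [← hI]
    refine integral_congr_ae (Filter.Eventually.of_forall fun g => ?_)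
    exact (Complex.mul_conj (F g)).symm
  have h3 : (∫ g : G2 d, Complex.normSq (F g)) = 0 := by
    have h2' : (∫ g : G2 d, (RCLike.ofReal (Complex.normSq (F g)) : ℂ)) = 0 := h2
    rw [integral_ofReal] at h2'
    exact RCLike.ofReal_eq_zero.mp h2'
  have h4 : (fun g : G2 d => Complex.normSq (F g)) =ᵐ[volume] 0 :=
    (integral_eq_zero_iff_of_nonneg (fun g => Complex.normSq_nonneg _)
      (integrable_of_continuousR _ (Complex.continuous_normSq.comp F.continuous))).mp h3
  have h5 : (fun g : G2 d => Complex.normSq (F g)) = 0 :=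
    (Continuous.ae_eq_iff_eq volume
      (Complex.continuous_normSq.comp F.continuous) continuous_const).mp h4
  intro g
  exact Complex.normSq_eq_zero.mp (congrFun h5 g)

/-- Master lemma: a continuous `(2ℤ)^d`-periodic function with `f(x+α) = λ f(x)`,
where `λ` avoids all character values `e^{πi⟨m,α⟩}`, `m ≠ 0`, is constant. -/
theorem master {d : ℕ} (α : Fin d → ℝ) (f : (Fin d → ℝ) → ℂ) (hf : Continuous f)
    (hper : ∀ (m : Fin d → ℤ) (x), f (x + fun i => (2 * (m i : ℤ) : ℝ)) = f x)
    (lam : ℂ)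
    (hlam : ∀ m : Fin d → ℤ, m ≠ 0 →
      Complex.exp (Real.pi * Complex.I * ((∑ i, (m i : ℝ) * α i : ℝ) : ℂ)) ≠ lam)
    (heq : ∀ x, f (x + α) = lam * f x) :
    ∀ x, f x = f 0 := by
  classical
  have hopen := isOpenQuotientMap_pG (d := d)
  have hcongr : ∀ x y, pG x = pG y → f x = f y := by
    intro x y h
    have hk : ∀ i, ∃ k : ℤ, y i = x i + 2 * (k : ℝ) := by
      intro i
      have h1 : (x i : AddCircle (2:ℝ)) = (y i : AddCircle (2:ℝ)) := congrFun h i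
      rw [QuotientAddGroup.eq] at h1
      obtain ⟨k, hk⟩ := AddSubgroup.mem_zmultiples_iff.mp h1
      rw [zsmul_eq_mul] at hk
      exact ⟨k, by linarith⟩
    choose k hk2 using hk
    have hy : y = x + fun i => (2 * (k i : ℤ) : ℝ) := by
      funext i
      have := hk2 i
      simp only [Pi.add_apply]
      linarith
    rw [hy, hper k x]
  set F0 : G2 d → ℂ := fun g => f (fun i => (g i).out) with hF0def
  have hF0 : ∀ x, F0 (pG x) = f x := by
    intro x
    refine hcongr _ _ ?_
    funext i
    exact QuotientAddGroup.out_eq' _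
  have hF0c : Continuous F0 := by
    rw [hopen.isQuotientMap.continuous_iff]
    have : F0 ∘ pG = f := funext hF0
    rw [this]
    exact hf
  set F : C(G2 d, ℂ) := ⟨F0, hF0c⟩ with hFdef
  set a : G2 d := pG α with ha
  have hFa : ∀ g, F (g + a) = lam * F g := by
    intro g
    obtain ⟨x, rfl⟩ := hopen.surjective g
    have h1 : pG x + a = pG (x + α) := (pG_add x α).symm
    rw [h1]
    show F0 (pG (x + α)) = lam * F0 (pG x)
    rw [hF0, hF0, heq]
  set c : (Fin d → ℤ) → ℂ := fun m => ∫ g : G2 d, F g * (starRingEnd ℂ) (chiC m g) with hc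
  have hstep : ∀ m, c m = (lam * (starRingEnd ℂ) (chiC m a)) * c m := by
    intro m
    have h1 : c m = ∫ g : G2 d, F (g + a) * (starRingEnd ℂ) (chiC m (g + a)) :=
      (integral_add_right_eq_self (fun g : G2 d => F g * (starRingEnd ℂ) (chiC m g)) a).symm
    conv_lhs => rw [h1]
    have h2 : (fun g : G2 d => F (g + a) * (starRingEnd ℂ) (chiC m (g + a))) =
        fun g => (lam * (starRingEnd ℂ) (chiC m a)) * (F g * (starRingEnd ℂ) (chiC m g)) := by
      funext g
      rw [hFa, chiC_add_arg, map_mul]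
      ring
    rw [h2, integral_const_mul]
  have hconj_a : ∀ m : Fin d → ℤ, chiC m a * (starRingEnd ℂ) (chiC m a) = 1 := by
    intro m
    rw [ha, chiC_pG]
    exact exp_pi_mul_conj _
  have hzero : ∀ m : Fin d → ℤ, m ≠ 0 → c m = 0 := by
    intro m hm
    by_contra hcne
    have h3 : (lam * (starRingEnd ℂ) (chiC m a) - 1) * c m = 0 := by
      linear_combination -(hstep m)
    rcases mul_eq_zero.mp h3 with h4 | h4
    · have h5 : lam * (starRingEnd ℂ) (chiC m a) = 1 := by linear_combination h4
      have h6 : lam = chiC m a := by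
        calc lam = lam * (chiC m a * (starRingEnd ℂ) (chiC m a)) := by
              rw [hconj_a, mul_one]
          _ = (lam * (starRingEnd ℂ) (chiC m a)) * chiC m a := by ring
          _ = chiC m a := by rw [h5, one_mul]
      refine hlam m hm ?_
      rw [ha, chiC_pG] at h6
      exact h6.symm
    · exact hcne h4
  by_cases hl : lam = 1
  · subst hl
    set V : ℝ := (volume (Set.univ : Set (G2 d))).toReal with hV
    have hVpos : 0 < V := by
      rw [hV]
      refine ENNReal.toReal_pos ?_ (measure_ne_top _ _)
      exact (IsOpen.measure_pos volume isOpen_univ ⟨pG 0, trivial⟩).ne'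
    set cst : ℂ := (∫ g : G2 d, F g) / (V : ℂ) with hcst
    have hchi0 : ∀ g : G2 d, chiC (0 : Fin d → ℤ) g = 1 := fun g => by rw [chiC_zero]; rfl
    have hK : ∀ m : Fin d → ℤ,
        ∫ g : G2 d, (F - ContinuousMap.const (G2 d) cst) g * (starRingEnd ℂ) (chiC m g) = 0 := by
      intro m
      have hint1 : Integrable (fun g : G2 d => F g * (starRingEnd ℂ) (chiC m g))
          (volume : Measure (G2 d)) :=
        integrable_of_continuous _
          (F.continuous.mul (Complex.continuous_conj.comp (chiC m).continuous))
      have hint2 : Integrable (fun g : G2 d => cst * (starRingEnd ℂ) (chiC m g))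
          (volume : Measure (G2 d)) :=
        integrable_of_continuous _
          (continuous_const.mul (Complex.continuous_conj.comp (chiC m).continuous))
      have hsplit : (fun g : G2 d =>
          (F - ContinuousMap.const (G2 d) cst) g * (starRingEnd ℂ) (chiC m g)) =
          fun g => F g * (starRingEnd ℂ) (chiC m g) - cst * (starRingEnd ℂ) (chiC m g) := by
        funext g
        simp only [ContinuousMap.sub_apply, ContinuousMap.const_apply]
        ring
      rw [hsplit, integral_sub hint1 hint2]
      by_cases hm : m = 0
      · subst hm
        have hone : (fun g : G2 d => F g * (starRingEnd ℂ) (chiC (0 : Fin d → ℤ) g)) =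
            fun g : G2 d => F g := by
          funext g
          rw [hchi0 g, map_one, mul_one]
        have hcstf : (fun g : G2 d => cst * (starRingEnd ℂ) (chiC (0 : Fin d → ℤ) g)) =
            fun _g : G2 d => cst := by
          funext g
          rw [hchi0 g, map_one, mul_one]
        rw [hone, hcstf, integral_const, Complex.real_smul, measureReal_def, ← hV]
        have hVne : ((V : ℝ) : ℂ) ≠ 0 := Complex.ofReal_ne_zero.mpr hVpos.ne'
        rw [hcst, mul_comm, div_mul_cancel₀ _ hVne, sub_self]
      · have hfirst : (∫ g : G2 d, F g * (starRingEnd ℂ) (chiC m g)) = 0 := hzero m hm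
        have hsecond : (∫ g : G2 d, cst * (starRingEnd ℂ) (chiC m g)) = 0 := by
          have hcc : (fun g : G2 d => cst * (starRingEnd ℂ) (chiC m g)) =
              fun g => cst * chiC (-m) g := by
            funext g
            congr 1
            rw [← star_chiC]
            rfl
          rw [hcc, integral_const_mul, integral_chiC (-m) (neg_ne_zero.mpr hm), mul_zero]
        rw [hfirst, hsecond, sub_zero]
    have hKz := complete (F - ContinuousMap.const (G2 d) cst) hK
    have hFc : ∀ g, F g = cst := by
      intro g
      have := hKz g
      simp only [ContinuousMap.sub_apply, ContinuousMap.const_apply] at this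
      exact sub_eq_zero.mp this
    intro x
    have e1 : f x = F (pG x) := (hF0 x).symm
    have e2 : f 0 = F (pG 0) := (hF0 0).symm
    rw [e1, e2, hFc, hFc]
  · have h0 : c 0 = 0 := by
      have h1 := hstep 0
      rw [show chiC (0 : Fin d → ℤ) a = 1 from by rw [chiC_zero]; rfl, map_one, mul_one] at h1
      have h2 : (lam - 1) * c 0 = 0 := by linear_combination -h1
      rcases mul_eq_zero.mp h2 with h3 | h3
      · exact absurd (by linear_combination h3) hl
      · exact h3
    have hall : ∀ m : Fin d → ℤ, ∫ g : G2 d, F g * (starRingEnd ℂ) (chiC m g) = 0 := by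
      intro m
      by_cases hm : m = 0
      · subst hm; exact h0
      · exact hzero m hm
    have hFz := complete F hall
    intro x
    have e1 : f x = F (pG x) := (hF0 x).symm
    have e2 : f 0 = F (pG 0) := (hF0 0).symm
    rw [e1, e2, hFz, hFz]

end Stmt16Aux

theorem statement16 (d : ℕ) (α : Fin d → ℝ) (hα : RatIndep α) (ρ : ℝ)
    (Atil : Matrix (Fin 2) (Fin 2) ℂ)
    (hAtil : Atil = !![Complex.exp (2 * (π:ℂ) * Complex.I * ρ), 0;
                       0, Complex.exp (-(2 * (π:ℂ) * Complex.I * ρ))])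
    (hres : ∀ m : Fin d → ℤ, m ≠ 0 →
      ∀ j : ℤ, 2 * ρ - (∑ i, (m i : ℝ) / 2 * α i) ≠ (j : ℝ))
    (B : (Fin d → ℝ) → Matrix (Fin 2) (Fin 2) ℂ)
    (hBc : ∀ i j, Continuous fun x => B x i j)
    (hBper : PerR2 B)
    (hBeq : ∀ x, B (x + α) = Atil * B x * Atil⁻¹) :
    ∃ Cmat, ∀ x, B x = Cmat := by
  classical
  set u : ℂ := Complex.exp (2 * (π:ℂ) * Complex.I * ρ) with hu
  set v : ℂ := Complex.exp (-(2 * (π:ℂ) * Complex.I * ρ)) with hv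
  have huv : u * v = 1 := by
    rw [hu, hv, ← Complex.exp_add, add_neg_cancel, Complex.exp_zero]
  have hAinv : Atil⁻¹ = !![v, 0; 0, u] := by
    apply Matrix.inv_eq_right_inv
    rw [hAtil]
    ext i j
    fin_cases i <;> fin_cases j <;>
      simp [Matrix.mul_apply, Fin.sum_univ_two, Matrix.one_apply, huv, mul_comm v u]
  have simpset : True := trivial
  have hπI : (π : ℂ) * Complex.I ≠ 0 :=
    mul_ne_zero (Complex.ofReal_ne_zero.mpr Real.pi_ne_zero) Complex.I_ne_zero
  -- the three possible multipliers avoid the character values at nonzero frequencies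
  have hlam1 : ∀ m : Fin d → ℤ, m ≠ 0 →
      Complex.exp (Real.pi * Complex.I * ((∑ i, (m i : ℝ) * α i : ℝ) : ℂ)) ≠ 1 := by
    intro m hm h
    rw [Complex.exp_eq_one_iff] at h
    obtain ⟨n, hn⟩ := h
    have hs : ((∑ i, (m i : ℝ) * α i : ℝ) : ℂ) = (((2 * n : ℤ) : ℝ) : ℂ) := by
      apply mul_left_cancel₀ hπI
      push_cast at hn ⊢
      linear_combination hn
    exact hα m hm (2 * n) (by exact_mod_cast hs)
  have hlamu : ∀ m : Fin d → ℤ, m ≠ 0 →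
      Complex.exp (Real.pi * Complex.I * ((∑ i, (m i : ℝ) * α i : ℝ) : ℂ)) ≠ u * u := by
    intro m hm h
    rw [hu, ← Complex.exp_add, Complex.exp_eq_exp_iff_exists_int] at h
    obtain ⟨n, hn⟩ := h
    have hs : (∑ i, (m i : ℝ) * α i) = 4 * ρ + 2 * n := by
      have hsC : ((∑ i, (m i : ℝ) * α i : ℝ) : ℂ) = ((4 * ρ + 2 * n : ℝ) : ℂ) := by
        apply mul_left_cancel₀ hπI
        push_cast at hn ⊢
        linear_combination hn
      exact_mod_cast hsC
    refine hres m hm (-n) ?_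
    have hd2 : (∑ i, (m i : ℝ) / 2 * α i) = (∑ i, (m i : ℝ) * α i) / 2 := by
      rw [Finset.sum_div]
      exact Finset.sum_congr rfl fun i _ => by ring
    rw [hd2, hs]
    push_cast
    ring
  have hlamv : ∀ m : Fin d → ℤ, m ≠ 0 →
      Complex.exp (Real.pi * Complex.I * ((∑ i, (m i : ℝ) * α i : ℝ) : ℂ)) ≠ v * v := by
    intro m hm h
    rw [hv, ← Complex.exp_add, Complex.exp_eq_exp_iff_exists_int] at h
    obtain ⟨n, hn⟩ := h
    have hs : (∑ i, (m i : ℝ) * α i) = -(4 * ρ) + 2 * n := by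
      have hsC : ((∑ i, (m i : ℝ) * α i : ℝ) : ℂ) = ((-(4 * ρ) + 2 * n : ℝ) : ℂ) := by
        apply mul_left_cancel₀ hπI
        push_cast at hn ⊢
        linear_combination hn
      exact_mod_cast hsC
    have hmne : (-m : Fin d → ℤ) ≠ 0 := neg_ne_zero.mpr hm
    refine hres (-m) hmne n ?_
    have hneg : (∑ i, ((-m) i : ℝ) / 2 * α i) = -((∑ i, (m i : ℝ) * α i) / 2) := by
      rw [Finset.sum_div, ← Finset.sum_neg_distrib]
      refine Finset.sum_congr rfl fun i _ => ?_
      simp only [Pi.neg_apply, Int.cast_neg]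
      ring
    rw [hneg, hs]
    ring
  -- entrywise application of the master lemma
  have hperE : ∀ i j, ∀ (m : Fin d → ℤ) (x),
      (fun y => B y i j) (x + fun i => (2 * (m i : ℤ) : ℝ)) = (fun y => B y i j) x := by
    intro i j m x
    show B (x + fun i => (2 * (m i : ℤ) : ℝ)) i j = B x i j
    rw [hBper m x]
  have k00 : ∀ x, B x 0 0 = B 0 0 0 := by
    refine Stmt16Aux.master α (fun y => B y 0 0) (hBc 0 0) (hperE 0 0) 1 hlam1 ?_
    intro x
    show B (x + α) 0 0 = 1 * B x 0 0
    rw [hBeq x, hAinv, hAtil]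
    simp only [Matrix.mul_apply, Fin.sum_univ_two, Matrix.cons_val_zero, Matrix.cons_val_one,
      Matrix.head_cons, Matrix.of_apply, Matrix.cons_val', Matrix.empty_val',
      Matrix.cons_val_fin_one, Matrix.head_fin_const]
    linear_combination B x 0 0 * huv
  have k01 : ∀ x, B x 0 1 = B 0 0 1 := by
    refine Stmt16Aux.master α (fun y => B y 0 1) (hBc 0 1) (hperE 0 1) (u * u) hlamu ?_
    intro x
    show B (x + α) 0 1 = (u * u) * B x 0 1
    rw [hBeq x, hAinv, hAtil]
    simp only [Matrix.mul_apply, Fin.sum_univ_two, Matrix.cons_val_zero, Matrix.cons_val_one,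
      Matrix.head_cons, Matrix.of_apply, Matrix.cons_val', Matrix.empty_val',
      Matrix.cons_val_fin_one, Matrix.head_fin_const]
    ring
  have k10 : ∀ x, B x 1 0 = B 0 1 0 := by
    refine Stmt16Aux.master α (fun y => B y 1 0) (hBc 1 0) (hperE 1 0) (v * v) hlamv ?_
    intro x
    show B (x + α) 1 0 = (v * v) * B x 1 0
    rw [hBeq x, hAinv, hAtil]
    simp only [Matrix.mul_apply, Fin.sum_univ_two, Matrix.cons_val_zero, Matrix.cons_val_one,
      Matrix.head_cons, Matrix.of_apply, Matrix.cons_val', Matrix.empty_val',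
      Matrix.cons_val_fin_one, Matrix.head_fin_const]
    ring
  have k11 : ∀ x, B x 1 1 = B 0 1 1 := by
    refine Stmt16Aux.master α (fun y => B y 1 1) (hBc 1 1) (hperE 1 1) 1 hlam1 ?_
    intro x
    show B (x + α) 1 1 = 1 * B x 1 1
    rw [hBeq x, hAinv, hAtil]
    simp only [Matrix.mul_apply, Fin.sum_univ_two, Matrix.cons_val_zero, Matrix.cons_val_one,
      Matrix.head_cons, Matrix.of_apply, Matrix.cons_val', Matrix.empty_val',
      Matrix.cons_val_fin_one, Matrix.head_fin_const]
    linear_combination B x 1 1 * huv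
  refine ⟨B 0, fun x => ?_⟩
  ext i j
  fin_cases i <;> fin_cases j
  · exact k00 x
  · exact k01 x
  · exact k10 x
  · exact k11 x

end
end
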